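/- arXiv:1407.1070 — 2 statements merged into one kernel-verified Lean document; each statement's English description precedes it below -/
import Mathlib

section
/- Let n, p ≥ 1, W ∈ ℝ^{n×p} with rows w_i, y ∈ ℝ^n, λ ≥ 0, δ ≥ 0. If β̂ is a local minimizer of the matrix uncertainty lasso objective β ↦ (1/(2n))∑_{i=1}^n (y_i − w_iᵀβ)² + λ‖β‖₁ + (δ/2)‖β‖₁², then for every j = 1,…,p: (1/n)|∑_{i=1}^n w_{ij}(y_i − w_iᵀβ̂)| ≤ λ + δ‖β̂‖₁, i.e. β̂ lies in the feasible set of the matrix uncertainty selector. -/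
/-!
Perturb `β̂` in a single coordinate, `β̂ + s eⱼ`. The quadratic loss changes exactly by
`-(s/n) ∑ᵢ wᵢⱼ(yᵢ - wᵢᵀβ̂) + O(s²)`, while by the triangle inequality `‖β̂ + s eⱼ‖₁ ≤ ‖β̂‖₁ + |s|`
both penalties grow by at most `|s| (λ + δ‖β̂‖₁) + O(s²)`. A one-variable function that has a
local minimum at `0` and is bounded above by `g 0 - a s + b |s| + C s²` must have `|a| ≤ b`.
-/

open Filter Topology

theorem IsLocalMin.nonneg_of_le_add_mul_add_sq {g : ℝ → ℝ} {b C : ℝ} (hg : IsLocalMin g 0)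
    (hle : ∀ t, 0 < t → g t ≤ g 0 + b * t + C * t ^ 2) : 0 ≤ b := by
  have hslope : ∀ᶠ t in 𝓝[>] (0 : ℝ), 0 ≤ b + C * t := by
    filter_upwards [nhdsWithin_le_nhds hg, self_mem_nhdsWithin] with t hgt (ht : 0 < t)
    have : 0 ≤ (b + C * t) * t := by nlinarith [hle t ht, hgt]
    exact nonneg_of_mul_nonneg_left this ht
  have hlim : Tendsto (fun t : ℝ => b + C * t) (𝓝[>] 0) (𝓝 b) :=
    ((continuous_const.add (continuous_const.mul continuous_id)).tendsto' 0 b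
      (by simp)).mono_left nhdsWithin_le_nhds
  exact ge_of_tendsto hlim hslope

theorem IsLocalMin.abs_le_of_le_sub_mul_add_abs_add_sq {g : ℝ → ℝ} {a b C : ℝ}
    (hg : IsLocalMin g 0) (hle : ∀ s, g s ≤ g 0 - a * s + b * |s| + C * s ^ 2) : |a| ≤ b := by
  have hright : 0 ≤ b - a := hg.nonneg_of_le_add_mul_add_sq fun t ht => by
    have := hle t
    rw [abs_of_pos ht] at this
    linarith
  have hleft : 0 ≤ b + a := by
    have hg' : IsLocalMin (fun t => g (-t)) 0 :=
      (neg_zero (G := ℝ) ▸ hg).comp_continuous continuous_neg.continuousAt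
    refine hg'.nonneg_of_le_add_mul_add_sq (C := C) fun t ht => ?_
    have := hle (-t)
    rw [abs_neg, abs_of_pos ht, neg_sq] at this
    simp only [neg_zero]
    linarith
  exact abs_le.mpr ⟨by linarith, by linarith⟩

section

variable {ι κ : Type*} [Fintype ι] [Fintype κ]

theorem sum_sq_sub_sum_mul_add_single [DecidableEq κ] (W : ι → κ → ℝ) (y : ι → ℝ)
    (β : κ → ℝ) (j : κ) (s : ℝ) :
    ∑ i, (y i - ∑ k, W i k * (β + Pi.single j s : κ → ℝ) k) ^ 2 =
      ∑ i, (y i - ∑ k, W i k * β k) ^ 2 - 2 * s * ∑ i, W i j * (y i - ∑ k, W i k * β k) +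
        s ^ 2 * ∑ i, W i j ^ 2 := by
  have hlin : ∀ i, ∑ k, W i k * (β + Pi.single j s : κ → ℝ) k = ∑ k, W i k * β k + W i j * s := by
    intro i
    simp [mul_add, Finset.sum_add_distrib, Pi.single_apply]
  simp only [hlin, Finset.mul_sum, ← Finset.sum_sub_distrib, ← Finset.sum_add_distrib]
  exact Finset.sum_congr rfl fun i _ => by ring

theorem sum_abs_add_single_le [DecidableEq κ] (β : κ → ℝ) (j : κ) (s : ℝ) :
    ∑ k, |(β + Pi.single j s : κ → ℝ) k| ≤ ∑ k, |β k| + |s| :=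
  calc ∑ k, |(β + Pi.single j s : κ → ℝ) k|
      ≤ ∑ k, (|β k| + |(Pi.single j s : κ → ℝ) k|) :=
        Finset.sum_le_sum fun k _ => abs_add_le _ _
    _ = ∑ k, |β k| + |s| := by
        rw [Finset.sum_add_distrib,
          Fintype.sum_eq_single (f := fun k => |(Pi.single j s : κ → ℝ) k|) j
            fun k hk => by simp [hk], Pi.single_eq_same]

noncomputable def muLassoObjective (n : ℝ) (W : ι → κ → ℝ) (y : ι → ℝ) (lam δ : ℝ)
    (β : κ → ℝ) : ℝ :=
  (1 / (2 * n)) * ∑ i, (y i - ∑ j, W i j * β j) ^ 2 +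
    lam * ∑ j, |β j| + (δ / 2) * (∑ j, |β j|) ^ 2

theorem muLassoObjective_add_single_le [DecidableEq κ] (n : ℝ) (W : ι → κ → ℝ) (y : ι → ℝ)
    {lam δ : ℝ} (hlam : 0 ≤ lam) (hδ : 0 ≤ δ) (β : κ → ℝ) (j : κ) (s : ℝ) :
    muLassoObjective n W y lam δ (β + Pi.single j s) ≤
      muLassoObjective n W y lam δ β - (1 / n * ∑ i, W i j * (y i - ∑ k, W i k * β k)) * s +
        (lam + δ * ∑ k, |β k|) * |s| + (1 / (2 * n) * ∑ i, W i j ^ 2 + δ / 2) * s ^ 2 := by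
  have hL := sum_abs_add_single_le β j s
  have hlinear : lam * ∑ k, |(β + Pi.single j s : κ → ℝ) k| ≤ lam * (∑ k, |β k| + |s|) :=
    mul_le_mul_of_nonneg_left hL hlam
  have hquadratic : δ / 2 * (∑ k, |(β + Pi.single j s : κ → ℝ) k|) ^ 2 ≤
      δ / 2 * (∑ k, |β k| + |s|) ^ 2 :=
    mul_le_mul_of_nonneg_left (pow_le_pow_left₀ (by positivity) hL 2) (by positivity)
  rw [muLassoObjective, muLassoObjective, sum_sq_sub_sum_mul_add_single]
  linear_combination hlinear + hquadratic + δ / 2 * sq_abs s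

end

theorem stmt_9_general (n p : ℕ)
    (W : Fin n → Fin p → ℝ) (y : Fin n → ℝ)
    (lam δ : ℝ) (hlam : 0 ≤ lam) (hδ : 0 ≤ δ)
    (βhat : Fin p → ℝ)
    (hmin : IsLocalMin
      (fun β : Fin p → ℝ =>
        (1 / (2 * (n : ℝ))) * ∑ i, (y i - ∑ j, W i j * β j) ^ 2 +
          lam * ∑ j, |β j| + (δ / 2) * (∑ j, |β j|) ^ 2)
      βhat) :
    ∀ j, (1 / (n : ℝ)) * |∑ i, W i j * (y i - ∑ j', W i j' * βhat j')| ≤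
      lam + δ * ∑ j', |βhat j'| := by
  intro j
  have hmin' : IsLocalMin (muLassoObjective n W y lam δ) (βhat + Pi.single j 0) := by
    rwa [Pi.single_zero, add_zero]
  have hline : IsLocalMin (fun s => muLassoObjective n W y lam δ (βhat + Pi.single j s)) 0 :=
    hmin'.comp_continuous (g := fun s => βhat + Pi.single j s)
      (continuous_const.add (continuous_single j)).continuousAt
  have hkkt := hline.abs_le_of_le_sub_mul_add_abs_add_sq fun s => by
    simpa only [Pi.single_zero, add_zero] using
      muLassoObjective_add_single_le (n : ℝ) W y hlam hδ βhat j s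
  rwa [abs_mul, abs_of_nonneg (by positivity : (0 : ℝ) ≤ 1 / n)] at hkkt

/-- KKT-based claim that solutions of the matrix uncertainty lasso are
contained in the feasible set of the matrix uncertainty selector: if `β̂` is a
local minimizer of `(1/(2n))∑ᵢ(yᵢ − wᵢᵀβ)² + λ‖β‖₁ + (δ/2)‖β‖₁²`, then
`(1/n)|∑ᵢ wᵢⱼ(yᵢ − wᵢᵀβ̂)| ≤ λ + δ‖β̂‖₁` for every `j`. -/
theorem stmt_9 (n p : ℕ) (hn : 1 ≤ n) (hp : 1 ≤ p)
    (W : Fin n → Fin p → ℝ) (y : Fin n → ℝ)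
    (lam δ : ℝ) (hlam : 0 ≤ lam) (hδ : 0 ≤ δ)
    (βhat : Fin p → ℝ)
    (hmin : IsLocalMin
      (fun β : Fin p → ℝ =>
        (1 / (2 * (n : ℝ))) * ∑ i, (y i - ∑ j, W i j * β j) ^ 2 +
          lam * ∑ j, |β j| + (δ / 2) * (∑ j, |β j|) ^ 2)
      βhat) :
    ∀ j, (1 / (n : ℝ)) * |∑ i, W i j * (y i - ∑ j', W i j' * βhat j')| ≤
      lam + δ * ∑ j', |βhat j'| :=
  stmt_9_general n p W y lam δ hlam hδ βhat hmin
end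

section
/- Let n, p ≥ 1, R ≥ 1, W̃ ∈ ℝ^{n×p} with rows w̃_i, z̃ ∈ ℝ^n, λ ≥ 0 and γ_1,…,γ_R ≥ 0. If β̂ is a local minimizer of F(β) = (1/(2n))∑_{i=1}^n (z̃_i − w̃_iᵀβ)² + λ‖β‖₁ + ∑_{r=1}^R γ_r ‖β‖₁^{r+1}, then for every j = 1,…,p: (1/n)|∑_{i=1}^n w̃_{ij}(z̃_i − w̃_iᵀβ̂)| ≤ λ + ∑_{r=1}^R γ_r (r+1) ‖β̂‖₁^r. -/
/-!
Along the coordinate line `t ↦ β̂ + t eⱼ` the objective is bounded above by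
`f t + φ (‖β̂‖₁ + |t|)`, where `f` is the least-squares part and
`φ u = λ u + ∑ᵣ γᵣ u ^ (r + 1)` is monotone on `[0, ∞)`. The majorant agrees with the objective
at `t = 0`, so it also has a local minimum there. Its one-sided derivatives at `0` are
`± f'(0) + φ'(‖β̂‖₁)`, hence both are nonnegative, i.e. `|f'(0)| ≤ φ'(‖β̂‖₁)`; and
`f'(0) = -(1/n) ∑ᵢ w̃ᵢⱼ (z̃ᵢ - w̃ᵢᵀβ̂)`.
-/
open Finset Filter Topology

theorem IsLocalMinOn.hasDerivWithinAt_Ici_nonneg {f : ℝ → ℝ} {f' a : ℝ}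
    (hmin : IsLocalMinOn f (Set.Ici a) a) (hf : HasDerivWithinAt f f' (Set.Ici a) a) :
    0 ≤ f' := by
  have hone : (1 : ℝ) ∈ posTangentConeAt (Set.Ici a) a :=
    one_mem_posTangentConeAt_iff_frequently.2
      (eventually_nhdsWithin_of_forall fun x (hx : x ∈ Set.Ioi a) =>
        Set.mem_Ici.2 (le_of_lt hx)).frequently
  simpa using hmin.hasFDerivWithinAt_nonneg hf.hasFDerivWithinAt hone

theorem neg_le_of_isLocalMin_add_comp_abs {f φ : ℝ → ℝ} {a b c : ℝ}
    (hf : HasDerivAt f a 0) (hφ : HasDerivAt φ b c)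
    (hmin : IsLocalMin (fun t => f t + φ (c + |t|)) 0) : -a ≤ b := by
  have hφc : HasDerivAt (fun t => φ (c + t)) b 0 :=
    HasDerivAt.comp_const_add c 0 (by rwa [add_zero])
  have hright : 0 ≤ a + b := by
    refine IsLocalMinOn.hasDerivWithinAt_Ici_nonneg ?_ (hf.add hφc).hasDerivWithinAt
    filter_upwards [nhdsWithin_le_nhds hmin, self_mem_nhdsWithin] with t ht (ht0 : 0 ≤ t)
    simpa [abs_of_nonneg ht0] using ht
  linarith

theorem abs_le_of_isLocalMin_add_comp_abs {f φ : ℝ → ℝ} {a b c : ℝ}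
    (hf : HasDerivAt f a 0) (hφ : HasDerivAt φ b c)
    (hmin : IsLocalMin (fun t => f t + φ (c + |t|)) 0) : |a| ≤ b := by
  have hf_neg : HasDerivAt (fun t => f (-t)) (-a) 0 := by
    simpa using HasDerivAt.comp_const_sub (0 : ℝ) 0 (by rwa [sub_zero])
  have hmin_neg : IsLocalMin (fun t => f (-t) + φ (c + |t|)) 0 := by
    have hneg : Tendsto (fun t : ℝ => -t) (𝓝 0) (𝓝 0) := by
      simpa using continuous_neg.tendsto (0 : ℝ)
    simpa [IsLocalMin, IsMinFilter] using hneg.eventually hmin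
  exact abs_le.2 ⟨neg_le.1 (neg_le_of_isLocalMin_add_comp_abs hf hφ hmin),
    by simpa using neg_le_of_isLocalMin_add_comp_abs hf_neg hφ hmin_neg⟩

theorem sum_abs_add_single_le_s10 {ι : Type*} [Fintype ι] [DecidableEq ι]
    (β : ι → ℝ) (j : ι) (t : ℝ) : ∑ i, |(β + Pi.single j t : ι → ℝ) i| ≤ ∑ i, |β i| + |t| :=
  calc ∑ i, |(β + Pi.single j t : ι → ℝ) i| ≤ ∑ i, (|β i| + |(Pi.single j t : ι → ℝ) i|) :=
        sum_le_sum fun i _ => abs_add_le _ _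
    _ = ∑ i, |β i| + |t| := by
        rw [sum_add_distrib]
        simp [Pi.single_apply, apply_ite]

theorem abs_le_of_isLocalMin_add_comp_sum_abs {ι : Type*} [Fintype ι] [DecidableEq ι]
    {Q : (ι → ℝ) → ℝ} {φ : ℝ → ℝ} {β : ι → ℝ} {j : ι} {d b : ℝ}
    (hQ : HasDerivAt (fun t => Q (β + Pi.single j t)) d 0)
    (hφ_mono : MonotoneOn φ (Set.Ici 0)) (hφ : HasDerivAt φ b (∑ i, |β i|))
    (hmin : IsLocalMin (fun x => Q x + φ (∑ i, |x i|)) β) : |d| ≤ b := by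
  refine abs_le_of_isLocalMin_add_comp_abs hQ hφ ?_
  have hline : Tendsto (fun t : ℝ => β + Pi.single j t) (𝓝 0) (𝓝 β) := by
    have : Continuous (fun t : ℝ => β + Pi.single j t) :=
      continuous_const.add (continuous_single (A := fun _ => ℝ) j)
    simpa using this.tendsto 0
  filter_upwards [hline.eventually hmin] with t ht
  calc Q (β + Pi.single j 0) + φ (∑ i, |β i| + |0|) = Q β + φ (∑ i, |β i|) := by simp
    _ ≤ Q (β + Pi.single j t) + φ (∑ i, |(β + Pi.single j t : ι → ℝ) i|) := ht
    _ ≤ Q (β + Pi.single j t) + φ (∑ i, |β i| + |t|) := by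
        gcongr
        exact hφ_mono (Set.mem_Ici.2 (by positivity)) (Set.mem_Ici.2 (by positivity))
          (sum_abs_add_single_le_s10 β j t)

theorem hasDerivAt_sum_sq_sub_sum_mul_add_single {ι κ : Type*} [Fintype ι] [Fintype κ]
    [DecidableEq κ] (c : ℝ) (W : ι → κ → ℝ) (z : ι → ℝ) (β : κ → ℝ) (j : κ) :
    HasDerivAt (fun t => c * ∑ i, (z i - ∑ k, W i k * (β + Pi.single j t : κ → ℝ) k) ^ 2)
      (-(2 * c) * ∑ i, W i j * (z i - ∑ k, W i k * β k)) 0 := by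
  have hline : ∀ i t, ∑ k, W i k * (β + Pi.single j t : κ → ℝ) k
      = ∑ k, W i k * β k + W i j * t := by
    intro i t
    simp [mul_add, sum_add_distrib, Pi.single_apply]
  simp only [hline]
  have hterm : ∀ i, HasDerivAt (fun t => (z i - (∑ k, W i k * β k + W i j * t)) ^ 2)
      (-(2 * W i j * (z i - ∑ k, W i k * β k))) 0 := by
    intro i
    refine ((((hasDerivAt_id (0 : ℝ)).const_mul (W i j)).const_add
      (∑ k, W i k * β k)).const_sub (z i) |>.pow 2).congr_deriv ?_
    simp only [mul_zero, add_zero, id_eq]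
    ring
  refine ((HasDerivAt.fun_sum fun i _ => hterm i).const_mul c).congr_deriv ?_
  rw [mul_sum, mul_sum]
  exact sum_congr rfl fun i _ => by ring

def gmulPenalty (lam : ℝ) (γ : ℕ → ℝ) (s : Finset ℕ) (u : ℝ) : ℝ :=
  lam * u + ∑ r ∈ s, γ r * u ^ (r + 1)

theorem gmulPenalty_monotoneOn {lam : ℝ} {γ : ℕ → ℝ} {s : Finset ℕ} (hlam : 0 ≤ lam)
    (hγ : ∀ r ∈ s, 0 ≤ γ r) : MonotoneOn (gmulPenalty lam γ s) (Set.Ici 0) := by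
  intro u (hu : 0 ≤ u) v _ huv
  unfold gmulPenalty
  gcongr with r hr
  exact hγ r hr

theorem hasDerivAt_gmulPenalty (lam : ℝ) (γ : ℕ → ℝ) (s : Finset ℕ) (u : ℝ) :
    HasDerivAt (gmulPenalty lam γ s) (lam + ∑ r ∈ s, γ r * ((r : ℝ) + 1) * u ^ r) u := by
  unfold gmulPenalty
  refine (((hasDerivAt_id u).const_mul lam).add
    (HasDerivAt.fun_sum fun r _ => ((hasDerivAt_pow (r + 1) u).const_mul (γ r)))).congr_deriv ?_
  simp [mul_assoc]

theorem stmt_10_general (n p R : ℕ)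
    (W : Fin n → Fin p → ℝ) (z : Fin n → ℝ)
    (lam : ℝ) (hlam : 0 ≤ lam) (γ : ℕ → ℝ) (hγ : ∀ r ∈ Finset.Icc 1 R, 0 ≤ γ r)
    (βhat : Fin p → ℝ)
    (hmin : IsLocalMin
      (fun β : Fin p → ℝ =>
        (1 / (2 * (n : ℝ))) * ∑ i, (z i - ∑ j, W i j * β j) ^ 2 +
          lam * ∑ j, |β j| +
          ∑ r ∈ Finset.Icc 1 R, γ r * (∑ j, |β j|) ^ (r + 1))
      βhat) :
    ∀ j, (1 / (n : ℝ)) * |∑ i, W i j * (z i - ∑ j', W i j' * βhat j')| ≤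
      lam + ∑ r ∈ Finset.Icc 1 R, γ r * ((r : ℝ) + 1) * (∑ j', |βhat j'|) ^ r := by
  intro j
  have hmin' : IsLocalMin (fun β : Fin p → ℝ =>
      (1 / (2 * (n : ℝ))) * ∑ i, (z i - ∑ k, W i k * β k) ^ 2 +
        gmulPenalty lam γ (Icc 1 R) (∑ k, |β k|)) βhat := by
    simpa only [gmulPenalty, add_assoc] using hmin
  have hkkt := abs_le_of_isLocalMin_add_comp_sum_abs
    (hasDerivAt_sum_sq_sub_sum_mul_add_single (1 / (2 * (n : ℝ))) W z βhat j)
    (gmulPenalty_monotoneOn hlam hγ) (hasDerivAt_gmulPenalty lam γ _ _) hmin'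
  calc (1 / (n : ℝ)) * |∑ i, W i j * (z i - ∑ j', W i j' * βhat j')|
      = |-(2 * (1 / (2 * (n : ℝ)))) * ∑ i, W i j * (z i - ∑ k, W i k * βhat k)| := by
        rw [show -(2 * (1 / (2 * (n : ℝ)))) = -(1 / n) by ring, abs_mul, abs_neg,
          abs_of_nonneg (by positivity : (0 : ℝ) ≤ 1 / n)]
    _ ≤ _ := hkkt

/-- KKT bound for the generalized matrix uncertainty lasso weighted least
squares step: a local minimizer `β̂` of
`F(β) = (1/(2n))∑ᵢ(z̃ᵢ − w̃ᵢᵀβ)² + λ‖β‖₁ + ∑_{r=1}^R γᵣ ‖β‖₁^{r+1}`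
satisfies `(1/n)|∑ᵢ w̃ᵢⱼ(z̃ᵢ − w̃ᵢᵀβ̂)| ≤ λ + ∑_{r=1}^R γᵣ (r+1) ‖β̂‖₁^r`. -/
theorem stmt_10 (n p R : ℕ) (hn : 1 ≤ n) (hp : 1 ≤ p) (hR : 1 ≤ R)
    (W : Fin n → Fin p → ℝ) (z : Fin n → ℝ)
    (lam : ℝ) (hlam : 0 ≤ lam) (γ : ℕ → ℝ) (hγ : ∀ r ∈ Finset.Icc 1 R, 0 ≤ γ r)
    (βhat : Fin p → ℝ)
    (hmin : IsLocalMin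
      (fun β : Fin p → ℝ =>
        (1 / (2 * (n : ℝ))) * ∑ i, (z i - ∑ j, W i j * β j) ^ 2 +
          lam * ∑ j, |β j| +
          ∑ r ∈ Finset.Icc 1 R, γ r * (∑ j, |β j|) ^ (r + 1))
      βhat) :
    ∀ j, (1 / (n : ℝ)) * |∑ i, W i j * (z i - ∑ j', W i j' * βhat j')| ≤
      lam + ∑ r ∈ Finset.Icc 1 R, γ r * ((r : ℝ) + 1) * (∑ j', |βhat j'|) ^ r :=
  stmt_10_general n p R W z lam hlam γ hγ βhat hmin
end
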